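/- Let h solve the height system with Bernoulli constant r, let s > s₀, set w(q,p) = h(q,p) − H(p;s), and let Φ = Φ^{(s)} be the flow force flux function. Then for all (q,p) ∈ S: Φ_p(q,p) = w_p(q,p)²/(h_p(q,p) H_p(p;s)²) − w_q(q,p)²/h_p(q,p) and Φ_q(q,p) = −w_q(q,p) ( (1 + w_q(q,p)²)/h_p(q,p)² − 1/H_p(p;s)² ). -/

import Mathlib

open MeasureTheory Set Filter

noncomputable section

/-- `Omeg ω p = ∫₀^p ω(t) dt`, the primitive of the vorticity function. -/
def Omeg (ω : ℝ → ℝ) (p : ℝ) : ℝ := ∫ t in (0:ℝ)..p, ω t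

/-- `s0 ω = sqrt (max_{p ∈ [0,1]} 2 Ω(p))`. -/
def s0 (ω : ℝ → ℝ) : ℝ := Real.sqrt (sSup ((fun p => 2 * Omeg ω p) '' Icc (0:ℝ) 1))

/-- `Hp ω p s = (s² − 2Ω(p))^{-1/2}`. -/
def Hp (ω : ℝ → ℝ) (p s : ℝ) : ℝ := (Real.sqrt (s ^ 2 - 2 * Omeg ω p))⁻¹

/-- `Hfun ω p s = H(p; s) = ∫₀^p (s² − 2Ω(τ))^{-1/2} dτ`. -/
def Hfun (ω : ℝ → ℝ) (p s : ℝ) : ℝ := ∫ τ in (0:ℝ)..p, Hp ω τ s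

/-- `dd ω s = d(s) = H(1; s)`. -/
def dd (ω : ℝ → ℝ) (s : ℝ) : ℝ := Hfun ω 1 s

/-- `RR ω s = R(s) = s²/2 − Ω(1) + d(s)`, the Bernoulli constant of the stream solution. -/
def RR (ω : ℝ → ℝ) (s : ℝ) : ℝ := s ^ 2 / 2 - Omeg ω 1 + dd ω s

/-- `sigmaFun ω s r = σ(s; r)`. -/
def sigmaFun (ω : ℝ → ℝ) (s r : ℝ) : ℝ :=
  ∫ p in (0:ℝ)..1,
    (1 / (2 * (Hp ω p s) ^ 2) - Hfun ω p s - Omeg ω p + Omeg ω 1 + r) * Hp ω p s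

/-- Partial derivative in the first (horizontal) variable `q`. -/
def dq (f : ℝ → ℝ → ℝ) (q p : ℝ) : ℝ := deriv (fun x => f x p) q

/-- Partial derivative in the second (vertical) variable `p`. -/
def dp (f : ℝ → ℝ → ℝ) (q p : ℝ) : ℝ := deriv (fun y => f q y) p

/-- The height system with Bernoulli constant `r` on the strip `S = ℝ × [0,1]`. -/
structure HeightSol (ω : ℝ → ℝ) (r : ℝ) (h : ℝ → ℝ → ℝ) : Prop where
  smooth : ContDiff ℝ 2 (Function.uncurry h)
  hp_pos : ∀ q : ℝ, ∀ p ∈ Icc (0:ℝ) 1, 0 < dp h q p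
  pde : ∀ q : ℝ, ∀ p ∈ Icc (0:ℝ) 1,
    (1 + (dq h q p) ^ 2) / (dp h q p) ^ 2 * dp (dp h) q p
      - 2 * (dq h q p) / (dp h q p) * dp (dq h) q p
      + dq (dq h) q p - ω p * dp h q p = 0
  top : ∀ q : ℝ, (1 + (dq h q 1) ^ 2) / (2 * (dp h q 1) ^ 2) + h q 1 = r
  bot : ∀ q : ℝ, h q 0 = 0

/-- The flow force of a height function `h`, computed on the vertical line through `q`. -/
def flowForce (ω : ℝ → ℝ) (r : ℝ) (h : ℝ → ℝ → ℝ) (q : ℝ) : ℝ :=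
  ∫ p in (0:ℝ)..1,
    ((1 - (dq h q p) ^ 2) / (2 * (dp h q p) ^ 2) - h q p - Omeg ω p + Omeg ω 1 + r) * dp h q p

/-- `wfun ω s h = w^{(s)} = h − H(·; s)`. -/
def wfun (ω : ℝ → ℝ) (s : ℝ) (h : ℝ → ℝ → ℝ) (q p : ℝ) : ℝ := h q p - Hfun ω p s

/-- The flow force flux function `Φ^{(s)}`. -/
def Phi (ω : ℝ → ℝ) (s : ℝ) (h : ℝ → ℝ → ℝ) (q p : ℝ) : ℝ :=
  ∫ p' in (0:ℝ)..p,
    ((dp (wfun ω s h) q p') ^ 2 / (dp h q p' * (Hp ω p' s) ^ 2)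
      - (dq (wfun ω s h) q p') ^ 2 / dp h q p')

/-- `h ∈ C^{2,γ}(S̄)`: `h` is twice continuously differentiable, all partial derivatives of
order ≤ 2 are bounded on the strip, and the second-order derivatives are uniformly
γ-Hölder continuous on the strip. -/
def C2Holder (γ : ℝ) (h : ℝ → ℝ → ℝ) : Prop :=
  ContDiff ℝ 2 (Function.uncurry h) ∧
  (∀ g ∈ ([h, dq h, dp h, dq (dq h), dp (dq h), dp (dp h)] : List (ℝ → ℝ → ℝ)),
    ∃ M : ℝ, ∀ q : ℝ, ∀ p ∈ Icc (0:ℝ) 1, |g q p| ≤ M) ∧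
  (∀ g ∈ ([dq (dq h), dp (dq h), dp (dp h)] : List (ℝ → ℝ → ℝ)),
    ∃ C : ℝ, ∀ q q' : ℝ, ∀ p ∈ Icc (0:ℝ) 1, ∀ p' ∈ Icc (0:ℝ) 1,
      |g q p - g q' p'| ≤ C * Real.sqrt ((q - q') ^ 2 + (p - p') ^ 2) ^ γ)

end

/-!
`Φ_p` is the integrand of `Φ` by the fundamental theorem of calculus; the integrand is continuous
on a neighbourhood of `[0, 1]` because `s > s₀` keeps `s² - 2Ω` positive there. For `Φ_q`,
differentiate under the integral sign: the height equation, together with `h_qp = h_pq`, turns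
`∂_q` of the integrand into `∂_p G` for `G = -h_q ((1 + h_q²)/h_p² - (s² - 2Ω))`, so
`Φ_q(q, p) = G(q, p) - G(q, 0)`, and `G(q, 0) = 0` because `h = 0` on the bed `p = 0`.
-/

open Function Interval

section PartialDerivatives

variable {f : ℝ → ℝ → ℝ} {q p : ℝ}

lemma dq_eq_fderiv (hf : DifferentiableAt ℝ (uncurry f) (q, p)) :
    dq f q p = fderiv ℝ (uncurry f) (q, p) (1, 0) :=
  (hf.hasFDerivAt.comp_hasDerivAt (l := uncurry f) q
    ((hasDerivAt_id q).prodMk (hasDerivAt_const q p))).deriv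

lemma dp_eq_fderiv (hf : DifferentiableAt ℝ (uncurry f) (q, p)) :
    dp f q p = fderiv ℝ (uncurry f) (q, p) (0, 1) :=
  (hf.hasFDerivAt.comp_hasDerivAt (l := uncurry f) p
    ((hasDerivAt_const p q).prodMk (hasDerivAt_id p))).deriv

lemma hasDerivAt_dq (hf : DifferentiableAt ℝ (uncurry f) (q, p)) :
    HasDerivAt (fun x => f x p) (dq f q p) q :=
  (hf.comp (g := uncurry f) q
    ((hasDerivAt_id q).prodMk (hasDerivAt_const q p)).differentiableAt).hasDerivAt

lemma hasDerivAt_dp (hf : DifferentiableAt ℝ (uncurry f) (q, p)) :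
    HasDerivAt (fun y => f q y) (dp f q p) p :=
  (hf.comp (g := uncurry f) p
    ((hasDerivAt_const p q).prodMk (hasDerivAt_id p)).differentiableAt).hasDerivAt

lemma uncurry_dq_eq_fderiv (hf : Differentiable ℝ (uncurry f)) :
    uncurry (dq f) = fun z => fderiv ℝ (uncurry f) z (1, 0) :=
  funext fun z => dq_eq_fderiv (hf z)

lemma uncurry_dp_eq_fderiv (hf : Differentiable ℝ (uncurry f)) :
    uncurry (dp f) = fun z => fderiv ℝ (uncurry f) z (0, 1) :=
  funext fun z => dp_eq_fderiv (hf z)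

lemma ContDiff.uncurry_dq {n : WithTop ℕ∞} (hf : ContDiff ℝ (n + 1) (uncurry f)) :
    ContDiff ℝ n (uncurry (dq f)) := by
  rw [uncurry_dq_eq_fderiv (hf.differentiable (by simp))]
  exact (hf.fderiv_right le_rfl).clm_apply contDiff_const

lemma ContDiff.uncurry_dp {n : WithTop ℕ∞} (hf : ContDiff ℝ (n + 1) (uncurry f)) :
    ContDiff ℝ n (uncurry (dp f)) := by
  rw [uncurry_dp_eq_fderiv (hf.differentiable (by simp))]
  exact (hf.fderiv_right le_rfl).clm_apply contDiff_const

lemma dq_dp_comm (hf : ContDiff ℝ 2 (uncurry f)) (q p : ℝ) : dq (dp f) q p = dp (dq f) q p := by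
  have hf1 : Differentiable ℝ (uncurry f) := hf.differentiable (by norm_num)
  have hD : Differentiable ℝ (fderiv ℝ (uncurry f)) :=
    (hf.fderiv_right (m := 1) (by norm_num)).differentiable (by norm_num)
  have hdp : Differentiable ℝ (uncurry (dp f)) :=
    (hf.uncurry_dp (n := 1)).differentiable one_ne_zero
  have hdq : Differentiable ℝ (uncurry (dq f)) :=
    (hf.uncurry_dq (n := 1)).differentiable one_ne_zero
  rw [dq_eq_fderiv (hdp _), dp_eq_fderiv (hdq _), uncurry_dp_eq_fderiv hf1,
    uncurry_dq_eq_fderiv hf1, fderiv_clm_apply (hD _) (differentiableAt_const _),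
    fderiv_clm_apply (hD _) (differentiableAt_const _)]
  simpa using (hf.contDiffAt.isSymmSndFDerivAt (by simp)).eq (1, 0) (0, 1)

end PartialDerivatives

lemma exists_Ioo_superset_Icc_of_isOpen {U : Set ℝ} {a b : ℝ} (hU : IsOpen U) (hab : a ≤ b)
    (hsub : Icc a b ⊆ U) : ∃ a' b', a' < a ∧ b < b' ∧ Ioo a' b' ⊆ U := by
  obtain ⟨a', ha', hIoc⟩ :=
    exists_Ioc_subset_of_mem_nhds (hU.mem_nhds (hsub ⟨le_rfl, hab⟩)) ⟨a - 1, by linarith⟩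
  obtain ⟨b', hb', hIco⟩ :=
    exists_Ico_subset_of_mem_nhds (hU.mem_nhds (hsub ⟨hab, le_rfl⟩)) ⟨b + 1, by linarith⟩
  refine ⟨a', b', ha', hb', fun t ht => ?_⟩
  rcases le_or_gt t a with hta | hat
  · exact hIoc ⟨ht.1, hta⟩
  rcases le_or_gt t b with htb | hbt
  · exact hsub ⟨hat.le, htb⟩
  · exact hIco ⟨hbt.le, ht.2⟩

lemma hasDerivAt_integral_of_continuousOn_of_isOpen {f : ℝ → ℝ} {U : Set ℝ} {a b : ℝ}
    (hU : IsOpen U) (hf : ContinuousOn f U) (hab : [[a, b]] ⊆ U) :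
    HasDerivAt (fun y => ∫ t in a..y, f t) (f b) b :=
  have hb : b ∈ U := hab right_mem_uIcc
  intervalIntegral.integral_hasDerivAt_right ((hf.mono hab).intervalIntegrable)
    (hf.stronglyMeasurableAtFilter hU b hb) (hf.continuousAt (hU.mem_nhds hb))

section StreamSolution

variable {ω : ℝ → ℝ} {s p : ℝ}

lemma hasDerivAt_Omeg (hω : Continuous ω) (p : ℝ) : HasDerivAt (Omeg ω) (ω p) p :=
  (hω.integral_hasStrictDerivAt 0 p).hasDerivAt

lemma continuous_Omeg (hω : Continuous ω) : Continuous (Omeg ω) :=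
  continuous_iff_continuousAt.2 fun p => (hasDerivAt_Omeg hω p).continuousAt

lemma two_mul_Omeg_lt_sq (hω : Continuous ω) (hs : s0 ω < s) (hp : p ∈ Icc (0:ℝ) 1) :
    2 * Omeg ω p < s ^ 2 :=
  (le_csSup (isCompact_Icc.image (continuous_const.mul (continuous_Omeg hω))).bddAbove
    (mem_image_of_mem _ hp)).trans_lt (Real.lt_sq_of_sqrt_lt hs)

lemma exists_Ioo_two_mul_Omeg_lt_sq (hω : Continuous ω) (hs : s0 ω < s) :
    ∃ a b, a < 0 ∧ 1 < b ∧ Ioo a b ⊆ {p | 2 * Omeg ω p < s ^ 2} :=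
  exists_Ioo_superset_Icc_of_isOpen
    (isOpen_lt (continuous_const.mul (continuous_Omeg hω)) continuous_const) zero_le_one
    fun _ hp => two_mul_Omeg_lt_sq hω hs hp

lemma Hp_pos (hp : 2 * Omeg ω p < s ^ 2) : 0 < Hp ω p s :=
  inv_pos.2 (Real.sqrt_pos.2 (sub_pos.2 hp))

lemma one_div_Hp_sq (hp : 2 * Omeg ω p < s ^ 2) : 1 / Hp ω p s ^ 2 = s ^ 2 - 2 * Omeg ω p := by
  rw [Hp, inv_pow, one_div, inv_inv, Real.sq_sqrt (sub_nonneg.2 hp.le)]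

lemma continuousOn_Hp (hω : Continuous ω) :
    ContinuousOn (fun p => Hp ω p s) {p | 2 * Omeg ω p < s ^ 2} :=
  ((continuous_const.sub (continuous_const.mul (continuous_Omeg hω))).continuousOn.sqrt).inv₀
    fun _ hp => (Real.sqrt_pos.2 (sub_pos.2 hp)).ne'

lemma hasDerivAt_Hfun (hω : Continuous ω) {a b : ℝ} (hI : Ioo a b ⊆ {p | 2 * Omeg ω p < s ^ 2})
    (h0 : 0 ∈ Ioo a b) (hp : p ∈ Ioo a b) : HasDerivAt (fun y => Hfun ω y s) (Hp ω p s) p :=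
  hasDerivAt_integral_of_continuousOn_of_isOpen isOpen_Ioo ((continuousOn_Hp hω).mono hI)
    (ordConnected_Ioo.uIcc_subset h0 hp)

lemma dq_wfun (h : ℝ → ℝ → ℝ) : dq (wfun ω s h) = dq h :=
  funext fun _ => funext fun _ => deriv_sub_const _

lemma dp_wfun {h : ℝ → ℝ → ℝ} {q : ℝ} (hh : DifferentiableAt ℝ (uncurry h) (q, p))
    (hH : HasDerivAt (fun y => Hfun ω y s) (Hp ω p s) p) :
    dp (wfun ω s h) q p = dp h q p - Hp ω p s :=
  ((hasDerivAt_dp hh).sub hH).deriv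

end StreamSolution

lemma hasDerivAt_intervalIntegral_of_continuousOn {F F' : ℝ → ℝ → ℝ} {a b : ℝ} (x₀ : ℝ)
    (hF : ∀ x, ContinuousOn (F x) [[a, b]])
    (hF' : ContinuousOn (uncurry F') (univ ×ˢ [[a, b]]))
    (hderiv : ∀ x, ∀ t ∈ [[a, b]], HasDerivAt (F · t) (F' x t) x) :
    HasDerivAt (fun x => ∫ t in a..b, F x t) (∫ t in a..b, F' x₀ t) x₀ := by
  obtain ⟨M, hM⟩ := ((isCompact_closedBall x₀ 1).prod isCompact_uIcc).exists_bound_of_continuousOn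
    (hF'.mono (prod_mono (subset_univ _) subset_rfl))
  have hF'x₀ : ContinuousOn (F' x₀) [[a, b]] := hF'.uncurry_left x₀ (mem_univ _)
  exact (intervalIntegral.hasDerivAt_integral_of_dominated_loc_of_deriv_le (bound := fun _ => M)
    (Metric.closedBall_mem_nhds x₀ one_pos)
    (Eventually.of_forall fun x =>
      ((hF x).mono uIoc_subset_uIcc).aestronglyMeasurable measurableSet_uIoc)
    (hF x₀).intervalIntegrable
    ((hF'x₀.mono uIoc_subset_uIcc).aestronglyMeasurable measurableSet_uIoc)
    (Eventually.of_forall fun t ht x hx => hM (x, t) ⟨hx, uIoc_subset_uIcc ht⟩)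
    intervalIntegrable_const
    (Eventually.of_forall fun t ht x _ => hderiv x t (uIoc_subset_uIcc ht))).2

lemma hasDerivAt_intervalIntegral_eq_sub {F F' G : ℝ → ℝ → ℝ} {a b : ℝ} (x₀ : ℝ)
    (hF : ∀ x, ContinuousOn (F x) [[a, b]])
    (hF' : ContinuousOn (uncurry F') (univ ×ˢ [[a, b]]))
    (hFx : ∀ x, ∀ t ∈ [[a, b]], HasDerivAt (F · t) (F' x t) x)
    (hGt : ∀ t ∈ [[a, b]], HasDerivAt (G x₀) (F' x₀ t) t) :
    HasDerivAt (fun x => ∫ t in a..b, F x t) (G x₀ b - G x₀ a) x₀ := by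
  rw [← intervalIntegral.integral_eq_sub_of_hasDerivAt hGt
    (hF'.uncurry_left x₀ (mem_univ _)).intervalIntegrable]
  exact hasDerivAt_intervalIntegral_of_continuousOn x₀ hF hF' hFx

section FlowForceFlux

variable {ω : ℝ → ℝ} {s : ℝ} {h : ℝ → ℝ → ℝ} {x t : ℝ}

noncomputable def phiDensity (ω : ℝ → ℝ) (s : ℝ) (h : ℝ → ℝ → ℝ) (q p : ℝ) : ℝ :=
  (dp (wfun ω s h) q p) ^ 2 / (dp h q p * (Hp ω p s) ^ 2) - (dq (wfun ω s h) q p) ^ 2 / dp h q p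

/-- The closed form of `Φ_q`, with `1 / H_p² = s² - 2Ω`. -/
noncomputable def phiQ (ω : ℝ → ℝ) (s : ℝ) (h : ℝ → ℝ → ℝ) (q p : ℝ) : ℝ :=
  -(dq h q p) * ((1 + (dq h q p) ^ 2) / (dp h q p) ^ 2 - (s ^ 2 - 2 * Omeg ω p))

/-- The closed form of the mixed derivative `Φ_qp = Φ_pq`. -/
noncomputable def phiQP (ω : ℝ → ℝ) (s : ℝ) (h : ℝ → ℝ → ℝ) (q p : ℝ) : ℝ :=
  dq (dp h) q p * ((s ^ 2 - 2 * Omeg ω p) - 1 / (dp h q p) ^ 2)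
    - 2 * dq h q p * dq (dq h) q p / dp h q p + (dq h q p) ^ 2 * dq (dp h) q p / (dp h q p) ^ 2

lemma phiDensity_eq (hh : DifferentiableAt ℝ (uncurry h) (x, t))
    (hH : HasDerivAt (fun y => Hfun ω y s) (Hp ω t s) t) :
    phiDensity ω s h x t =
      (dp h x t - Hp ω t s) ^ 2 / (dp h x t * (Hp ω t s) ^ 2) - (dq h x t) ^ 2 / dp h x t := by
  rw [phiDensity, dq_wfun, dp_wfun hh hH]

lemma continuousOn_phiDensity (hω : Continuous ω) (hh : ContDiff ℝ 1 (uncurry h)) {a b : ℝ}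
    (hI : Ioo a b ⊆ {p | 2 * Omeg ω p < s ^ 2}) (h0 : 0 ∈ Ioo a b) (x : ℝ) :
    ContinuousOn (phiDensity ω s h x) (Ioo a b ∩ {t | 0 < dp h x t}) := by
  have hdq : Continuous (dq h x) := (hh.uncurry_dq (n := 0)).continuous.uncurry_left x
  have hdp : Continuous (dp h x) := (hh.uncurry_dp (n := 0)).continuous.uncurry_left x
  have hHp : ContinuousOn (fun t => Hp ω t s) (Ioo a b ∩ {t | 0 < dp h x t}) :=
    (continuousOn_Hp hω).mono (inter_subset_left.trans hI)
  refine ContinuousOn.congr ?_ fun t ht =>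
    phiDensity_eq (hh.differentiable one_ne_zero _) (hasDerivAt_Hfun hω hI h0 ht.1)
  refine (((hdp.continuousOn.sub hHp).pow 2).div (hdp.continuousOn.mul (hHp.pow 2)) ?_).sub
    ((hdq.continuousOn.pow 2).div hdp.continuousOn fun t ht => ht.2.ne')
  exact fun t ht => mul_ne_zero ht.2.ne' (pow_ne_zero 2 (Hp_pos (hI ht.1)).ne')

lemma hasDerivAt_phiDensity (hh : ContDiff ℝ 2 (uncurry h))
    (hH : HasDerivAt (fun y => Hfun ω y s) (Hp ω t s) t) (ht : 2 * Omeg ω t < s ^ 2)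
    (hx : dp h x t ≠ 0) :
    HasDerivAt (fun x => phiDensity ω s h x t) (phiQP ω s h x t) x := by
  have hdq := hasDerivAt_dq ((hh.uncurry_dq (n := 1)).differentiable one_ne_zero (x, t))
  have hdp := hasDerivAt_dq ((hh.uncurry_dp (n := 1)).differentiable one_ne_zero (x, t))
  have hHp : Hp ω t s ≠ 0 := (Hp_pos ht).ne'
  rw [funext fun x => phiDensity_eq (hh.differentiable two_ne_zero (x, t)) hH]
  refine ((((hdp.sub_const (Hp ω t s)).pow 2).div (hdp.mul_const (Hp ω t s ^ 2))
    (mul_ne_zero hx (pow_ne_zero 2 hHp))).sub ((hdq.pow 2).div hdp hx)).congr_deriv ?_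
  rw [phiQP, ← one_div_Hp_sq ht]
  simp only [Pi.pow_apply]
  field_simp
  ring

lemma hasDerivAt_phiQ {r : ℝ} (hω : Continuous ω) (hsol : HeightSol ω r h) (ht : t ∈ Icc (0:ℝ) 1) :
    HasDerivAt (phiQ ω s h x) (phiQP ω s h x t) t := by
  have hdq := hasDerivAt_dp ((hsol.smooth.uncurry_dq (n := 1)).differentiable one_ne_zero (x, t))
  have hdp := hasDerivAt_dp ((hsol.smooth.uncurry_dp (n := 1)).differentiable one_ne_zero (x, t))
  have hx : dp h x t ≠ 0 := (hsol.hp_pos x t ht).ne'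
  refine (hdq.neg.mul ((((hdq.pow 2).const_add 1).div (hdp.pow 2) (pow_ne_zero 2 hx)).sub
    (((hasDerivAt_Omeg hω t).const_mul 2).const_sub (s ^ 2)))).congr_deriv ?_
  simp only [Pi.pow_apply, Pi.neg_apply, Pi.sub_apply, Pi.div_apply]
  rw [phiQP, dq_dp_comm hsol.smooth]
  have hpde := hsol.pde x t ht
  field_simp
  field_simp at hpde
  linear_combination (2 * dq h x t * dp h x t) * hpde

lemma continuousOn_phiQP (hω : Continuous ω) (hh : ContDiff ℝ 2 (uncurry h)) :
    ContinuousOn (uncurry (phiQP ω s h)) {z | dp h z.1 z.2 ≠ 0} := by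
  have hdq : Continuous fun z : ℝ × ℝ => dq h z.1 z.2 := (hh.uncurry_dq (n := 1)).continuous
  have hdp : Continuous fun z : ℝ × ℝ => dp h z.1 z.2 := (hh.uncurry_dp (n := 1)).continuous
  have hdqq : Continuous fun z : ℝ × ℝ => dq (dq h) z.1 z.2 :=
    ((hh.uncurry_dq (n := 1)).uncurry_dq (n := 0)).continuous
  have hdqp : Continuous fun z : ℝ × ℝ => dq (dp h) z.1 z.2 :=
    ((hh.uncurry_dp (n := 1)).uncurry_dq (n := 0)).continuous
  have hΩ : Continuous fun z : ℝ × ℝ => Omeg ω z.2 := (continuous_Omeg hω).comp continuous_snd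
  have hne : ∀ z ∈ {z : ℝ × ℝ | dp h z.1 z.2 ≠ 0}, dp h z.1 z.2 ≠ 0 := fun _ hz => hz
  have hne2 : ∀ z ∈ {z : ℝ × ℝ | dp h z.1 z.2 ≠ 0}, dp h z.1 z.2 ^ 2 ≠ 0 :=
    fun _ hz => pow_ne_zero 2 hz
  exact ((hdqp.continuousOn.mul ((continuous_const.sub (continuous_const.mul hΩ)).continuousOn.sub
    (continuousOn_const.div (hdp.pow 2).continuousOn hne2))).sub
    (((continuous_const.mul hdq).mul hdqq).continuousOn.div hdp.continuousOn hne)).add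
    (((hdq.pow 2).mul hdqp).continuousOn.div (hdp.pow 2).continuousOn hne2)

lemma phiQ_zero (hbot : ∀ q, h q 0 = 0) (x : ℝ) : phiQ ω s h x 0 = 0 := by
  have hdq : dq h x 0 = 0 := by simp only [dq, hbot, deriv_const]
  simp [phiQ, hdq]

end FlowForceFlux

/-- for a solution `h` of the height system, `s > s₀`, `w = h − H(·;s)` and
`Φ = Φ^{(s)}`, one has on `S`:
`Φ_p = w_p²/(h_p H_p²) − w_q²/h_p` and `Φ_q = −w_q ((1 + w_q²)/h_p² − 1/H_p²)`. -/
theorem stmt14 (ω : ℝ → ℝ) (hω : Continuous ω) (r : ℝ) (h : ℝ → ℝ → ℝ)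
    (hsol : HeightSol ω r h)
    (s : ℝ) (hs : s0 ω < s) :
    ∀ q : ℝ, ∀ p ∈ Icc (0:ℝ) 1,
      dp (Phi ω s h) q p =
        (dp (wfun ω s h) q p) ^ 2 / (dp h q p * (Hp ω p s) ^ 2)
          - (dq (wfun ω s h) q p) ^ 2 / dp h q p ∧
      dq (Phi ω s h) q p =
        -(dq (wfun ω s h) q p) *
          ((1 + (dq (wfun ω s h) q p) ^ 2) / (dp h q p) ^ 2 - 1 / (Hp ω p s) ^ 2) := by
  intro q p hp
  obtain ⟨a, b, ha, hb, hI⟩ := exists_Ioo_two_mul_Omeg_lt_sq hω hs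
  have hIcc : Icc (0:ℝ) 1 ⊆ Ioo a b := Icc_subset_Ioo ha hb
  have hsub : [[0, p]] ⊆ Icc (0:ℝ) 1 := by
    rw [uIcc_of_le hp.1]; exact Icc_subset_Icc_right hp.2
  have hH : ∀ t ∈ Icc (0:ℝ) 1, HasDerivAt (fun y => Hfun ω y s) (Hp ω t s) t :=
    fun t ht => hasDerivAt_Hfun hω hI (hIcc ⟨le_rfl, zero_le_one⟩) (hIcc ht)
  have hV : ∀ x, Icc (0:ℝ) 1 ⊆ Ioo a b ∩ {t | 0 < dp h x t} :=
    fun x t ht => ⟨hIcc ht, hsol.hp_pos x t ht⟩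
  have hdens := continuousOn_phiDensity hω (hsol.smooth.of_le one_le_two) hI
    (hIcc ⟨le_rfl, zero_le_one⟩)
  have hVopen : IsOpen (Ioo a b ∩ {t | 0 < dp h q t}) := isOpen_Ioo.inter
    (isOpen_lt continuous_const ((hsol.smooth.uncurry_dp (n := 1)).continuous.uncurry_left q))
  refine ⟨(hasDerivAt_integral_of_continuousOn_of_isOpen hVopen (hdens q)
    (hsub.trans (hV q))).deriv, ?_⟩
  have hPhi := hasDerivAt_intervalIntegral_eq_sub (F := phiDensity ω s h) (G := phiQ ω s h) q
    (fun x => (hdens x).mono (hsub.trans (hV x)))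
    ((continuousOn_phiQP hω hsol.smooth).mono fun z hz => (hsol.hp_pos z.1 z.2 (hsub hz.2)).ne')
    (fun x t ht => hasDerivAt_phiDensity hsol.smooth (hH t (hsub ht)) (hI (hIcc (hsub ht)))
      (hsol.hp_pos x t (hsub ht)).ne')
    (fun t ht => hasDerivAt_phiQ hω hsol (hsub ht))
  have hPhiq : dq (Phi ω s h) q p = phiQ ω s h q p - phiQ ω s h q 0 := hPhi.deriv
  rw [hPhiq, phiQ_zero hsol.bot, sub_zero, phiQ, dq_wfun, one_div_Hp_sq (hI (hIcc hp))]
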